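/- arXiv:1810.00557 — 5 statements merged into one kernel-verified Lean document; each statement's English description precedes it below -/
import Mathlib

section
/- A unit-speed curve ψ in ℝ³ with nonvanishing curvature κ and torsion τ is a general helix (i.e. τ/κ is constant) if and only if its modified-frame tangent T = ψ' satisfies T''' = μN + (3κ'/κ)N', where N = T' and μ = κ''/κ - κ² - τ² - 3(κ'/κ)². -/
/-!
Differentiating `N' = -κ²T + (κ'/κ)N + τB` once more gives
`T''' = μN + (3κ'/κ)N' + κ (τ/κ)' B`, so the identity for `T'''` holds exactly where
`(τ/κ)' B = 0`. Where `B` vanishes, `‖N‖² = κ² - τ⟪T, B⟫ = κ² > 0`, so `B' = -τN ≠ 0` and that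
zero of `B` is isolated; a derivative that vanishes on a punctured neighbourhood vanishes at its
centre too. Hence `(τ/κ)' = 0` on the whole interval and `τ/κ` is constant.
-/

open scoped RealInnerProductSpace
open Filter Topology Set

theorem hasDerivAt_of_eventually_hasDerivAt {E : Type*} [NormedAddCommGroup E] [NormedSpace ℝ E]
    {f g : ℝ → E} {x : ℝ} (hfg : ∀ᶠ y in 𝓝[≠] x, HasDerivAt f (g y) y)
    (hf : ContinuousAt f x) (hg : ContinuousAt g x) : HasDerivAt f (g x) x := by
  have hdiff : DifferentiableOn ℝ f {y | HasDerivAt f (g y) y} :=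
    fun y hy => hy.differentiableAt.differentiableWithinAt
  have hderiv : deriv f =ᶠ[𝓝[≠] x] g := hfg.mono fun y hy => hy.deriv
  have hlim : Tendsto g (𝓝[≠] x) (𝓝 (g x)) := hg.tendsto.mono_left nhdsWithin_le_nhds
  have hright : HasDerivWithinAt f (g x) (Ici x) x :=
    hasDerivWithinAt_Ici_of_tendsto_deriv hdiff hf.continuousWithinAt (nhdsGT_le_nhdsNE x hfg)
      ((hlim.congr' hderiv.symm).mono_left (nhdsGT_le_nhdsNE x))
  have hleft : HasDerivWithinAt f (g x) (Iic x) x :=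
    hasDerivWithinAt_Iic_of_tendsto_deriv hdiff hf.continuousWithinAt (nhdsLT_le_nhdsNE x hfg)
      ((hlim.congr' hderiv.symm).mono_left (nhdsLT_le_nhdsNE x))
  simpa using hleft.union hright

section Frame

variable {E : Type*} [NormedAddCommGroup E] [InnerProductSpace ℝ E]
  {T N B : ℝ → E} {κ κ' κ'' τ τ' : ℝ → ℝ} {U : Set ℝ} {s : ℝ}

theorem HasDerivAt.inner_add_inner_eq_zero {f g : ℝ → E} {f' g' : E} {c : ℝ}
    (hf : HasDerivAt f f' s) (hg : HasDerivAt g g' s)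
    (hc : (fun t => ⟪f t, g t⟫) =ᶠ[𝓝 s] fun _ => c) : ⟪f s, g'⟫ + ⟪f', g s⟫ = 0 :=
  (hf.inner ℝ hg).unique ((hasDerivAt_const s c).congr_of_eventuallyEq hc)

theorem norm_sq_normal_eq (hU : IsOpen U) (hs : s ∈ U) (hunit : ∀ t ∈ U, ‖T t‖ = 1)
    (hT : ∀ t ∈ U, HasDerivAt T (N t) t)
    (hN : ∀ t ∈ U, HasDerivAt N (-(κ t ^ 2) • T t + (κ' t / κ t) • N t + τ t • B t) t) :
    ‖N s‖ ^ 2 = κ s ^ 2 - τ s * ⟪T s, B s⟫ := by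
  have hTN : ∀ t ∈ U, ⟪T t, N t⟫ = 0 := fun t ht => by
    have h := (hT t ht).inner_add_inner_eq_zero (hT t ht) (c := 1) <|
      eventually_of_mem (hU.mem_nhds ht) fun u hu => by simp [hunit u hu]
    linarith [real_inner_comm (T t) (N t)]
  have h := (hT s hs).inner_add_inner_eq_zero (hN s hs) (c := 0) <|
    eventually_of_mem (hU.mem_nhds hs) hTN
  simp only [inner_add_right, inner_smul_right, real_inner_self_eq_norm_sq, hunit s hs,
    hTN s hs] at h
  linarith

theorem hasDerivAt_frame_second_derivative (hκ0 : κ s ≠ 0)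
    (hT : HasDerivAt T (N s) s)
    (hN : HasDerivAt N (-(κ s ^ 2) • T s + (κ' s / κ s) • N s + τ s • B s) s)
    (hB : HasDerivAt B (-τ s • N s + (κ' s / κ s) • B s) s)
    (hκ : HasDerivAt κ (κ' s) s) (hκ' : HasDerivAt κ' (κ'' s) s) (hτ : HasDerivAt τ (τ' s) s) :
    HasDerivAt (fun t => -(κ t ^ 2) • T t + (κ' t / κ t) • N t + τ t • B t)
      ((κ'' s / κ s - κ s ^ 2 - τ s ^ 2 - 3 * (κ' s / κ s) ^ 2) • N s +
        (3 * κ' s / κ s) • (-(κ s ^ 2) • T s + (κ' s / κ s) • N s + τ s • B s) +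
        (κ s * ((τ' s * κ s - τ s * κ' s) / κ s ^ 2)) • B s) s := by
  refine ((((hκ.pow 2).neg.smul hT).add ((hκ'.div hκ hκ0).smul hN)).add (hτ.smul hB)).congr_deriv ?_
  simp only [Pi.pow_apply, Pi.neg_apply, Pi.div_apply]
  match_scalars <;> field_simp <;> ring

theorem deriv_deriv_deriv_eq_iff (hU : IsOpen U) (hs : s ∈ U) (hκ0 : κ s ≠ 0)
    (hT : ∀ t ∈ U, HasDerivAt T (N t) t)
    (hN : ∀ t ∈ U, HasDerivAt N (-(κ t ^ 2) • T t + (κ' t / κ t) • N t + τ t • B t) t)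
    (hB : HasDerivAt B (-τ s • N s + (κ' s / κ s) • B s) s)
    (hκ : HasDerivAt κ (κ' s) s) (hκ' : HasDerivAt κ' (κ'' s) s) (hτ : HasDerivAt τ (τ' s) s) :
    deriv (deriv (deriv T)) s =
        (κ'' s / κ s - κ s ^ 2 - τ s ^ 2 - 3 * (κ' s / κ s) ^ 2) • N s +
          (3 * κ' s / κ s) • deriv N s ↔
      ((τ' s * κ s - τ s * κ' s) / κ s ^ 2) • B s = 0 := by
  have hdT : EqOn (deriv T) N U := fun t ht => (hT t ht).deriv
  have hdN : EqOn (deriv N) (fun t => -(κ t ^ 2) • T t + (κ' t / κ t) • N t + τ t • B t) U :=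
    fun t ht => (hN t ht).deriv
  rw [(hdT.deriv hU).deriv hU hs, hdN.deriv hU hs, hdN hs,
    (hasDerivAt_frame_second_derivative hκ0 (hT s hs) (hN s hs) hB hκ hκ' hτ).deriv]
  simp only [add_eq_left, smul_eq_zero, mul_eq_zero, hκ0, false_or]

theorem eqOn_zero_of_smul_binormal_eq_zero {f f' : ℝ → ℝ} (hU : IsOpen U)
    (hκ0 : ∀ t ∈ U, κ t ≠ 0) (hτ0 : ∀ t ∈ U, τ t ≠ 0) (hunit : ∀ t ∈ U, ‖T t‖ = 1)
    (hT : ∀ t ∈ U, HasDerivAt T (N t) t)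
    (hN : ∀ t ∈ U, HasDerivAt N (-(κ t ^ 2) • T t + (κ' t / κ t) • N t + τ t • B t) t)
    (hB : ∀ t ∈ U, HasDerivAt B (-τ t • N t + (κ' t / κ t) • B t) t)
    (hf : ∀ t ∈ U, HasDerivAt f (f' t) t) (hfB : ∀ t ∈ U, f' t • B t = 0) :
    EqOn f' 0 U := by
  intro s hs
  by_cases hBs : B s = 0
  · have hNs : N s ≠ 0 := fun hNs => hκ0 s hs <| pow_eq_zero_iff two_ne_zero |>.1 <| by
      simpa [hBs, hNs] using (norm_sq_normal_eq hU hs hunit hT hN).symm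
    have hB' : -τ s • N s + (κ' s / κ s) • B s ≠ 0 := by
      simpa [hBs, hτ0 s hs] using hNs
    have hfree : ∀ᶠ t in 𝓝[≠] s, HasDerivAt f 0 t := by
      filter_upwards [(hB s hs).eventually_ne hB' (c := 0),
        nhdsWithin_le_nhds (hU.mem_nhds hs)] with t hBt ht
      simpa [(smul_eq_zero.1 (hfB t ht)).resolve_right hBt] using hf t ht
    exact (hf s hs).unique <|
      hasDerivAt_of_eventually_hasDerivAt (g := 0) hfree (hf s hs).continuousAt continuousAt_const
  · exact (smul_eq_zero.1 (hfB s hs)).resolve_right hBs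

end Frame

theorem general_helix_iff_third_derivative_general
    (a b : ℝ)
    (T N B : ℝ → EuclideanSpace ℝ (Fin 3)) (κ κ' κ'' τ τ' : ℝ → ℝ)
    (hκpos : ∀ s ∈ Set.Ioo a b, 0 < κ s)
    (hunit : ∀ s ∈ Set.Ioo a b, ‖T s‖ = 1)
    (hT : ∀ s ∈ Set.Ioo a b, HasDerivAt T (N s) s)
    (hN : ∀ s ∈ Set.Ioo a b,
      HasDerivAt N (-(κ s ^ 2) • T s + (κ' s / κ s) • N s + τ s • B s) s)
    (hB : ∀ s ∈ Set.Ioo a b, HasDerivAt B (-τ s • N s + (κ' s / κ s) • B s) s)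
    (hκ : ∀ s ∈ Set.Ioo a b, HasDerivAt κ (κ' s) s)
    (hκ' : ∀ s ∈ Set.Ioo a b, HasDerivAt κ' (κ'' s) s)
    (hτ : ∀ s ∈ Set.Ioo a b, HasDerivAt τ (τ' s) s)
    (hτ0 : ∀ s ∈ Set.Ioo a b, τ s ≠ 0) :
    (∃ c : ℝ, ∀ s ∈ Set.Ioo a b, τ s = c * κ s) ↔
      (∀ s ∈ Set.Ioo a b,
        deriv (deriv (deriv T)) s =
          (κ'' s / κ s - κ s ^ 2 - τ s ^ 2 - 3 * (κ' s / κ s) ^ 2) • N s +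
            (3 * κ' s / κ s) • deriv N s) := by
  have hκ0 : ∀ s ∈ Ioo a b, κ s ≠ 0 := fun s hs => (hκpos s hs).ne'
  have hratio : ∀ s ∈ Ioo a b,
      HasDerivAt (fun t => τ t / κ t) ((τ' s * κ s - τ s * κ' s) / κ s ^ 2) s :=
    fun s hs => (hτ s hs).div (hκ s hs) (hκ0 s hs)
  have hiff : ∀ s ∈ Ioo a b, _ := fun s hs =>
    deriv_deriv_deriv_eq_iff isOpen_Ioo hs (hκ0 s hs) hT hN (hB s hs) (hκ s hs) (hκ' s hs) (hτ s hs)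
  constructor
  · rintro ⟨c, hc⟩ s hs
    have hconst : HasDerivAt (fun t => τ t / κ t) 0 s :=
      (hasDerivAt_const s c).congr_of_eventuallyEq <| eventually_of_mem (isOpen_Ioo.mem_nhds hs)
        fun t ht => by dsimp only; rw [hc t ht, mul_div_cancel_right₀ c (hκ0 t ht)]
    rw [hiff s hs, (hratio s hs).unique hconst, zero_smul]
  · intro h
    have hzero := eqOn_zero_of_smul_binormal_eq_zero isOpen_Ioo hκ0 hτ0 hunit hT hN hB hratio
      fun s hs => (hiff s hs).1 (h s hs)
    obtain ⟨c, hc⟩ := isOpen_Ioo.exists_is_const_of_deriv_eq_zero isPreconnected_Ioo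
      (fun s hs => (hratio s hs).differentiableAt.differentiableWithinAt)
      fun s hs => (hratio s hs).deriv.trans (hzero hs)
    exact ⟨c, fun s hs => by rw [← hc s hs, div_mul_cancel₀ _ (hκ0 s hs)]⟩

/-- A unit speed curve `ψ` is a general helix (`τ/κ` constant) with respect to the modified
orthogonal frame if and only if `T''' = μ N + (3κ'/κ) N'` where
`μ = κ''/κ - κ² - τ² - 3(κ'/κ)²`. -/
theorem general_helix_iff_third_derivative
    (a b : ℝ) (hab : a < b)
    (ψ T N B : ℝ → EuclideanSpace ℝ (Fin 3)) (κ κ' κ'' τ τ' : ℝ → ℝ)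
    (hκpos : ∀ s ∈ Set.Ioo a b, 0 < κ s)
    (hψ : ∀ s ∈ Set.Ioo a b, HasDerivAt ψ (T s) s)
    (hunit : ∀ s ∈ Set.Ioo a b, ‖T s‖ = 1)
    (hT : ∀ s ∈ Set.Ioo a b, HasDerivAt T (N s) s)
    (hN : ∀ s ∈ Set.Ioo a b,
      HasDerivAt N (-(κ s ^ 2) • T s + (κ' s / κ s) • N s + τ s • B s) s)
    (hB : ∀ s ∈ Set.Ioo a b, HasDerivAt B (-τ s • N s + (κ' s / κ s) • B s) s)
    (hκ : ∀ s ∈ Set.Ioo a b, HasDerivAt κ (κ' s) s)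
    (hκ' : ∀ s ∈ Set.Ioo a b, HasDerivAt κ' (κ'' s) s)
    (hτ : ∀ s ∈ Set.Ioo a b, HasDerivAt τ (τ' s) s)
    (hτ0 : ∀ s ∈ Set.Ioo a b, τ s ≠ 0) :
    (∃ c : ℝ, ∀ s ∈ Set.Ioo a b, τ s = c * κ s) ↔
      (∀ s ∈ Set.Ioo a b,
        deriv (deriv (deriv T)) s =
          (κ'' s / κ s - κ s ^ 2 - τ s ^ 2 - 3 * (κ' s / κ s) ^ 2) • N s +
            (3 * κ' s / κ s) • deriv N s) :=
  general_helix_iff_third_derivative_general a b T N B κ κ' κ'' τ τ' hκpos hunit hT hN hB hκ hκ' hτ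
    hτ0
end

section
/- Let ψ be a unit-speed curve in ℝ³ with constant nonzero curvature κ and non-constant torsion τ. Then ψ is a slant helix (i.e. there is a fixed unit vector U with ⟨N(s), U⟩ constant, where N = κn is the modified-frame normal) if and only if the function τ'/(κ² + τ²)^{3/2} is constant. -/
/-!
Put `u = ⟪T, U⟫`, `w = ⟪B, U⟫` and `m = κ² + τ²`. If `⟪N, U⟫ = c` on the interval, then
`u' = c`, `w' = -τ c`, and differentiating `⟪N, U⟫` gives `κ² u = τ w`; differentiating this once
more gives `τ' w = c m`. Hence `(w √m)' = τ (τ' w - c m) / √m = 0`, and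
`τ' / m^{3/2} = c / (w √m)` is constant. The case `c = 0` cannot occur: then `u` and `w` are
constant, so either `w = 0`, `u = 0` and `U` is orthogonal to the whole frame, or `τ = κ² u / w`
is constant.

Conversely, if `τ' / m^{3/2} = c`, then `c ≠ 0` (else `τ` is constant) and
`(τ / √m) T + c N + (1 / √m) B` has zero derivative, since `(τ / √m)' = κ² c` and
`(1 / √m)' = -τ c`; its inner product with `N` is `c κ²`.
-/

open scoped RealInnerProductSpace
open Set Module

theorem exists_forall_eq_of_hasDerivAt_zero {𝕜 G : Type*} [RCLike 𝕜] [NormedAddCommGroup G]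
    [NormedSpace 𝕜 G] {f : 𝕜 → G} {S : Set 𝕜} (hS : IsOpen S) (hS' : IsPreconnected S)
    (hf : ∀ x ∈ S, HasDerivAt f 0 x) : ∃ c, ∀ x ∈ S, f x = c :=
  hS.exists_is_const_of_deriv_eq_zero hS'
    (fun x hx ↦ (hf x hx).differentiableAt.differentiableWithinAt) fun x hx ↦ (hf x hx).deriv

theorem HasDerivAt.unique_of_eqOn {𝕜 G : Type*} [NontriviallyNormedField 𝕜]
    [NormedAddCommGroup G] [NormedSpace 𝕜 G] {f g : 𝕜 → G} {f' g' : G} {S : Set 𝕜} {x : 𝕜}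
    (hS : IsOpen S) (hx : x ∈ S) (hfg : EqOn f g S) (hf : HasDerivAt f f' x)
    (hg : HasDerivAt g g' x) : f' = g' :=
  (hf.congr_of_eventuallyEq (Filter.eventuallyEq_of_mem (hS.mem_nhds hx) hfg.symm)).unique hg

theorem eq_zero_of_forall_inner_eq_zero_of_orthogonal {E ι : Type*} [NormedAddCommGroup E]
    [InnerProductSpace ℝ E] [FiniteDimensional ℝ E] [Fintype ι] {v : ι → E}
    (hcard : Fintype.card ι = finrank ℝ E) (hv : ∀ i, v i ≠ 0)
    (horth : Pairwise fun i j ↦ ⟪v i, v j⟫ = 0) {U : E} (hU : ∀ i, ⟪v i, U⟫ = 0) : U = 0 := by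
  have hspan : Submodule.span ℝ (range v) = ⊤ :=
    (linearIndependent_of_ne_zero_of_inner_eq_zero hv horth).span_eq_top_of_card_eq_finrank' hcard
  have hle : Submodule.span ℝ (range v) ≤ (ℝ ∙ U)ᗮ :=
    Submodule.span_le.2 <| range_subset_iff.2 fun i ↦
      Submodule.mem_orthogonal_singleton_iff_inner_left.2 (hU i)
  rw [hspan] at hle
  exact inner_self_eq_zero.1 <| Submodule.mem_orthogonal_singleton_iff_inner_left.1 (hle trivial)

theorem eq_zero_of_inner_eq_zero_of_orthogonal₃ {E : Type*} [NormedAddCommGroup E]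
    [InnerProductSpace ℝ E] [FiniteDimensional ℝ E] (hE : finrank ℝ E = 3) {x y z U : E}
    (hx : x ≠ 0) (hy : y ≠ 0) (hz : z ≠ 0)
    (hxy : ⟪x, y⟫ = 0) (hxz : ⟪x, z⟫ = 0) (hyz : ⟪y, z⟫ = 0)
    (hxU : ⟪x, U⟫ = 0) (hyU : ⟪y, U⟫ = 0) (hzU : ⟪z, U⟫ = 0) : U = 0 := by
  refine eq_zero_of_forall_inner_eq_zero_of_orthogonal (v := ![x, y, z]) (by simp [hE])
    (fun i ↦ by fin_cases i <;> assumption) (fun i j hij ↦ ?_)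
    (fun i ↦ by fin_cases i <;> assumption)
  fin_cases i <;> fin_cases j <;> simp_all [real_inner_comm]

theorem Real.rpow_three_halves {x : ℝ} (hx : 0 ≤ x) : x ^ (3 / 2 : ℝ) = x * √x := by
  rw [show (3 / 2 : ℝ) = 1 + 1 / 2 by norm_num, Real.rpow_add' hx (by norm_num), Real.rpow_one,
    Real.sqrt_eq_rpow]

section SqrtSqAddSq

variable {κ τ' s : ℝ} {τ : ℝ → ℝ}

theorem hasDerivAt_sqrt_sq_add_sq (hκ : κ ≠ 0) (hτ : HasDerivAt τ τ' s) :
    HasDerivAt (fun t ↦ √(κ ^ 2 + τ t ^ 2)) (τ s * τ' / √(κ ^ 2 + τ s ^ 2)) s := by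
  have hm : κ ^ 2 + τ s ^ 2 ≠ 0 := by positivity
  refine (((hτ.fun_pow 2).const_add (κ ^ 2)).sqrt hm).congr_deriv ?_
  field_simp
  ring

theorem hasDerivAt_div_sqrt_sq_add_sq (hκ : κ ≠ 0) (hτ : HasDerivAt τ τ' s) :
    HasDerivAt (fun t ↦ τ t / √(κ ^ 2 + τ t ^ 2))
      (κ ^ 2 * (τ' / (κ ^ 2 + τ s ^ 2) ^ (3 / 2 : ℝ))) s := by
  have hpos : 0 < √(κ ^ 2 + τ s ^ 2) := by positivity
  refine (hτ.div (hasDerivAt_sqrt_sq_add_sq hκ hτ) hpos.ne').congr_deriv ?_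
  rw [Real.rpow_three_halves (by positivity)]
  field_simp
  rw [Real.sq_sqrt (by positivity)]
  ring

theorem hasDerivAt_inv_sqrt_sq_add_sq (hκ : κ ≠ 0) (hτ : HasDerivAt τ τ' s) :
    HasDerivAt (fun t ↦ (√(κ ^ 2 + τ t ^ 2))⁻¹)
      (-τ s * (τ' / (κ ^ 2 + τ s ^ 2) ^ (3 / 2 : ℝ))) s := by
  have hpos : 0 < √(κ ^ 2 + τ s ^ 2) := by positivity
  refine ((hasDerivAt_sqrt_sq_add_sq hκ hτ).inv hpos.ne').congr_deriv ?_
  rw [Real.rpow_three_halves (by positivity)]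
  field_simp
  rw [Real.sq_sqrt (by positivity)]

end SqrtSqAddSq

section Frame

variable {E : Type*} [NormedAddCommGroup E] [InnerProductSpace ℝ E]
  {S : Set ℝ} {κ c s : ℝ} {T N B : ℝ → E} {τ τ' : ℝ → ℝ} {U : E}

theorem hasDerivAt_inner_tangent (hT : HasDerivAt T (N s) s) (hc : ⟪N s, U⟫ = c) :
    HasDerivAt (fun t ↦ ⟪T t, U⟫) c s := by
  simpa [hc] using hT.inner ℝ (hasDerivAt_const s U)

theorem hasDerivAt_inner_binormal (hB : HasDerivAt B (-τ s • N s) s) (hc : ⟪N s, U⟫ = c) :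
    HasDerivAt (fun t ↦ ⟪B t, U⟫) (-(τ s * c)) s := by
  simpa [hc, real_inner_smul_left] using hB.inner ℝ (hasDerivAt_const s U)

theorem sq_mul_inner_tangent_eq (hS : IsOpen S) (hs : s ∈ S)
    (hN : HasDerivAt N (-(κ ^ 2) • T s + τ s • B s) s) (hc : ∀ t ∈ S, ⟪N t, U⟫ = c) :
    κ ^ 2 * ⟪T s, U⟫ = τ s * ⟪B s, U⟫ := by
  have h := (hN.inner ℝ (hasDerivAt_const s U)).unique_of_eqOn hS hs hc (hasDerivAt_const s c)
  simp only [inner_add_left, real_inner_smul_left, inner_zero_right] at h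
  linarith

theorem deriv_mul_inner_binormal_eq (hS : IsOpen S) (hs : s ∈ S) (hT : HasDerivAt T (N s) s)
    (hN : ∀ t ∈ S, HasDerivAt N (-(κ ^ 2) • T t + τ t • B t) t)
    (hB : HasDerivAt B (-τ s • N s) s) (hτ : HasDerivAt τ (τ' s) s)
    (hc : ∀ t ∈ S, ⟪N t, U⟫ = c) :
    τ' s * ⟪B s, U⟫ = c * (κ ^ 2 + τ s ^ 2) := by
  have h := ((hasDerivAt_inner_tangent hT (hc s hs)).const_mul (κ ^ 2)).unique_of_eqOn hS hs
    (fun t ht ↦ sq_mul_inner_tangent_eq hS ht (hN t ht) hc)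
    (hτ.mul (hasDerivAt_inner_binormal hB (hc s hs)))
  linear_combination -h

theorem exists_slant_ratio_eq_of_inner_normal_eq (hκ : κ ≠ 0) (hS : IsOpen S)
    (hS' : IsPreconnected S) (hc0 : c ≠ 0) (hT : ∀ t ∈ S, HasDerivAt T (N t) t)
    (hN : ∀ t ∈ S, HasDerivAt N (-(κ ^ 2) • T t + τ t • B t) t)
    (hB : ∀ t ∈ S, HasDerivAt B (-τ t • N t) t) (hτ : ∀ t ∈ S, HasDerivAt τ (τ' t) t)
    (hc : ∀ t ∈ S, ⟪N t, U⟫ = c) :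
    ∃ r, ∀ s ∈ S, τ' s / (κ ^ 2 + τ s ^ 2) ^ (3 / 2 : ℝ) = r := by
  have hτw (s) (hs : s ∈ S) := deriv_mul_inner_binormal_eq hS hs (hT s hs) hN (hB s hs) (hτ s hs) hc
  have hconst : ∀ s ∈ S, HasDerivAt (fun t ↦ ⟪B t, U⟫ * √(κ ^ 2 + τ t ^ 2)) 0 s := by
    intro s hs
    refine ((hasDerivAt_inner_binormal (hB s hs) (hc s hs)).mul
      (hasDerivAt_sqrt_sq_add_sq hκ (hτ s hs))).congr_deriv ?_
    field_simp
    linear_combination τ s * hτw s hs - τ s * c * Real.sq_sqrt (by positivity : 0 ≤ κ ^ 2 + τ s ^ 2)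
  obtain ⟨K, hK⟩ := exists_forall_eq_of_hasDerivAt_zero hS hS' hconst
  refine ⟨c / K, fun s hs ↦ ?_⟩
  have hm : 0 < κ ^ 2 + τ s ^ 2 := by positivity
  have hw : ⟪B s, U⟫ ≠ 0 := fun hw ↦ mul_ne_zero hc0 hm.ne' (by simpa [hw] using (hτw s hs).symm)
  rw [Real.rpow_three_halves hm.le, ← hK s hs, div_eq_div_iff (by positivity) (by positivity)]
  linear_combination √(κ ^ 2 + τ s ^ 2) * hτw s hs

theorem inner_tangent_eq_zero_and_inner_binormal_eq_zero (hκ : κ ≠ 0) (hS : IsOpen S)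
    (hS' : IsPreconnected S) (hτc : ¬∃ c, ∀ s ∈ S, τ s = c)
    (hT : ∀ t ∈ S, HasDerivAt T (N t) t)
    (hN : ∀ t ∈ S, HasDerivAt N (-(κ ^ 2) • T t + τ t • B t) t)
    (hB : ∀ t ∈ S, HasDerivAt B (-τ t • N t) t) (hc : ∀ t ∈ S, ⟪N t, U⟫ = 0) :
    ∀ s ∈ S, ⟪T s, U⟫ = 0 ∧ ⟪B s, U⟫ = 0 := by
  obtain ⟨u₀, hu⟩ := exists_forall_eq_of_hasDerivAt_zero hS hS' fun s hs ↦
    hasDerivAt_inner_tangent (hT s hs) (hc s hs)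
  obtain ⟨w₀, hw⟩ := exists_forall_eq_of_hasDerivAt_zero hS hS' fun s hs ↦ by
    simpa using hasDerivAt_inner_binormal (hB s hs) (hc s hs)
  have hτw : ∀ s ∈ S, κ ^ 2 * u₀ = τ s * w₀ := fun s hs ↦ by
    rw [← hu s hs, ← hw s hs]
    exact sq_mul_inner_tangent_eq hS hs (hN s hs) hc
  have hw₀ : w₀ = 0 := by
    by_contra hw₀
    exact hτc ⟨κ ^ 2 * u₀ / w₀, fun s hs ↦ by rw [hτw s hs]; field_simp⟩
  refine fun s hs ↦ ⟨?_, (hw s hs).trans hw₀⟩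
  rw [hu s hs]
  simpa [hw₀, hκ] using hτw s hs

noncomputable def slantAxis (κ c : ℝ) (T N B : ℝ → E) (τ : ℝ → ℝ) (s : ℝ) : E :=
  (τ s / √(κ ^ 2 + τ s ^ 2)) • T s + c • N s + (√(κ ^ 2 + τ s ^ 2))⁻¹ • B s

theorem hasDerivAt_slantAxis (hκ : κ ≠ 0) (hT : HasDerivAt T (N s) s)
    (hN : HasDerivAt N (-(κ ^ 2) • T s + τ s • B s) s) (hB : HasDerivAt B (-τ s • N s) s)
    (hτ : HasDerivAt τ (τ' s) s) (hr : τ' s / (κ ^ 2 + τ s ^ 2) ^ (3 / 2 : ℝ) = c) :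
    HasDerivAt (slantAxis κ c T N B τ) 0 s := by
  have h := (((hasDerivAt_div_sqrt_sq_add_sq hκ hτ).smul hT).add (hN.const_smul c)).add
    ((hasDerivAt_inv_sqrt_sq_add_sq hκ hτ).smul hB)
  rw [hr] at h
  refine h.congr_deriv (f := slantAxis κ c T N B τ) ?_
  module

theorem inner_normal_slantAxis (hTN : ⟪T s, N s⟫ = 0) (hNN : ⟪N s, N s⟫ = κ ^ 2)
    (hNB : ⟪N s, B s⟫ = 0) : ⟪N s, slantAxis κ c T N B τ s⟫ = c * κ ^ 2 := by
  rw [slantAxis, inner_add_right, inner_add_right, real_inner_smul_right, real_inner_smul_right,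
    real_inner_smul_right, real_inner_comm, hTN, hNN, hNB]
  ring

end Frame

theorem slant_helix_iff_general
    (a b : ℝ)
    (T N B : ℝ → EuclideanSpace ℝ (Fin 3)) (κ : ℝ) (τ τ' : ℝ → ℝ)
    (hκ0 : κ ≠ 0)
    (hτnonconst : ¬ ∃ c : ℝ, ∀ s ∈ Set.Ioo a b, τ s = c)
    (hunit : ∀ s ∈ Set.Ioo a b, ‖T s‖ = 1)
    (hT : ∀ s ∈ Set.Ioo a b, HasDerivAt T (N s) s)
    (hN : ∀ s ∈ Set.Ioo a b, HasDerivAt N (-(κ ^ 2) • T s + τ s • B s) s)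
    (hB : ∀ s ∈ Set.Ioo a b, HasDerivAt B (-τ s • N s) s)
    (hτ : ∀ s ∈ Set.Ioo a b, HasDerivAt τ (τ' s) s)
    (hNN : ∀ s ∈ Set.Ioo a b, ⟪N s, N s⟫ = κ ^ 2)
    (hBB : ∀ s ∈ Set.Ioo a b, ⟪B s, B s⟫ = κ ^ 2)
    (hTN : ∀ s ∈ Set.Ioo a b, ⟪T s, N s⟫ = 0)
    (hTB : ∀ s ∈ Set.Ioo a b, ⟪T s, B s⟫ = 0)
    (hNB : ∀ s ∈ Set.Ioo a b, ⟪N s, B s⟫ = 0) :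
    (∃ U : EuclideanSpace ℝ (Fin 3), U ≠ 0 ∧ ∃ c : ℝ, ∀ s ∈ Set.Ioo a b, ⟪N s, U⟫ = c) ↔
      (∃ c : ℝ, ∀ s ∈ Set.Ioo a b, τ' s / (κ ^ 2 + τ s ^ 2) ^ ((3 : ℝ) / 2) = c) := by
  obtain ⟨s₀, hs₀, -⟩ : ∃ s ∈ Ioo a b, τ s ≠ 0 := by
    push Not at hτnonconst
    exact hτnonconst 0
  constructor
  · rintro ⟨U, hU0, c, hc⟩
    rcases eq_or_ne c 0 with rfl | hc0
    · obtain ⟨hTU, hBU⟩ := inner_tangent_eq_zero_and_inner_binormal_eq_zero hκ0 isOpen_Ioo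
        isPreconnected_Ioo hτnonconst hT hN hB hc s₀ hs₀
      have hκ2 : (0 : ℝ) < κ ^ 2 := by positivity
      refine absurd (eq_zero_of_inner_eq_zero_of_orthogonal₃ finrank_euclideanSpace_fin
        (norm_ne_zero_iff.1 (by simp [hunit s₀ hs₀]))
        (real_inner_self_pos.1 (hNN s₀ hs₀ ▸ hκ2)) (real_inner_self_pos.1 (hBB s₀ hs₀ ▸ hκ2))
        (hTN s₀ hs₀) (hTB s₀ hs₀) (hNB s₀ hs₀) hTU (hc s₀ hs₀) hBU) hU0
    · exact exists_slant_ratio_eq_of_inner_normal_eq hκ0 isOpen_Ioo isPreconnected_Ioo hc0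
        hT hN hB hτ hc
  · rintro ⟨c, hc⟩
    have hc0 : c ≠ 0 := by
      rintro rfl
      refine hτnonconst <| exists_forall_eq_of_hasDerivAt_zero isOpen_Ioo isPreconnected_Ioo
        fun s hs ↦ ?_
      have hm : (κ ^ 2 + τ s ^ 2) ^ ((3 : ℝ) / 2) ≠ 0 := by positivity
      simpa [(div_eq_zero_iff.1 (hc s hs)).resolve_right hm] using hτ s hs
    obtain ⟨U, hU⟩ := exists_forall_eq_of_hasDerivAt_zero isOpen_Ioo isPreconnected_Ioo
      fun s hs ↦ hasDerivAt_slantAxis hκ0 (hT s hs) (hN s hs) (hB s hs) (hτ s hs) (hc s hs)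
    have hNU : ∀ s ∈ Ioo a b, ⟪N s, U⟫ = c * κ ^ 2 := fun s hs ↦
      hU s hs ▸ inner_normal_slantAxis (hTN s hs) (hNN s hs) (hNB s hs)
    refine ⟨U, ?_, c * κ ^ 2, hNU⟩
    rintro rfl
    simpa [hc0, hκ0] using (hNU s₀ hs₀).symm

/-- A unit speed curve with constant nonzero curvature `κ` and non-constant torsion `τ` is a
slant helix (its modified-frame normal `N` makes a constant inner product with some fixed
nonzero vector) if and only if `τ'/(κ² + τ²)^{3/2}` is constant. -/
theorem slant_helix_iff
    (a b : ℝ) (hab : a < b)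
    (ψ T N B : ℝ → EuclideanSpace ℝ (Fin 3)) (κ : ℝ) (τ τ' : ℝ → ℝ)
    (hκ0 : κ ≠ 0)
    (hτnonconst : ¬ ∃ c : ℝ, ∀ s ∈ Set.Ioo a b, τ s = c)
    (hψ : ∀ s ∈ Set.Ioo a b, HasDerivAt ψ (T s) s)
    (hunit : ∀ s ∈ Set.Ioo a b, ‖T s‖ = 1)
    (hT : ∀ s ∈ Set.Ioo a b, HasDerivAt T (N s) s)
    (hN : ∀ s ∈ Set.Ioo a b, HasDerivAt N (-(κ ^ 2) • T s + τ s • B s) s)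
    (hB : ∀ s ∈ Set.Ioo a b, HasDerivAt B (-τ s • N s) s)
    (hτ : ∀ s ∈ Set.Ioo a b, HasDerivAt τ (τ' s) s)
    (hNN : ∀ s ∈ Set.Ioo a b, ⟪N s, N s⟫ = κ ^ 2)
    (hBB : ∀ s ∈ Set.Ioo a b, ⟪B s, B s⟫ = κ ^ 2)
    (hTN : ∀ s ∈ Set.Ioo a b, ⟪T s, N s⟫ = 0)
    (hTB : ∀ s ∈ Set.Ioo a b, ⟪T s, B s⟫ = 0)
    (hNB : ∀ s ∈ Set.Ioo a b, ⟪N s, B s⟫ = 0) :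
    (∃ U : EuclideanSpace ℝ (Fin 3), U ≠ 0 ∧ ∃ c : ℝ, ∀ s ∈ Set.Ioo a b, ⟪N s, U⟫ = c) ↔
      (∃ c : ℝ, ∀ s ∈ Set.Ioo a b, τ' s / (κ ^ 2 + τ s ^ 2) ^ ((3 : ℝ) / 2) = c) :=
  slant_helix_iff_general a b T N B κ τ τ' hκ0 hτnonconst hunit hT hN hB hτ hNN hBB hTN hTB hNB
end

section
/- If (φ, ψ) is a Bertrand pair with ψ(s) = φ(s) + δ(s)N_φ(s) in the modified orthogonal frame (N_φ = κ_φ n_φ), then δ(s) = c/κ_φ(s) for some nonzero constant c, and the Euclidean distance ‖ψ(s) - φ(s)‖ = |c| is constant. -/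
open scoped RealInnerProductSpace

/-- For a Bertrand pair `(φ, ψ)` with `ψ = φ + δ N_φ` in the modified orthogonal frame,
`δ = c/κ_φ` for a nonzero constant `c` and the distance `‖ψ(s) - φ(s)‖ = |c|` is constant. -/
theorem bertrand_pair_constant_distance
    (a b : ℝ) (hab : a < b)
    (φ ψ T N B nψ : ℝ → EuclideanSpace ℝ (Fin 3)) (κ κ' τ δ δ' ε : ℝ → ℝ)
    (hκpos : ∀ s ∈ Set.Ioo a b, 0 < κ s)
    (hφ : ∀ s ∈ Set.Ioo a b, HasDerivAt φ (T s) s)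
    (hT : ∀ s ∈ Set.Ioo a b, HasDerivAt T (N s) s)
    (hN : ∀ s ∈ Set.Ioo a b,
      HasDerivAt N (-(κ s ^ 2) • T s + (κ' s / κ s) • N s + τ s • B s) s)
    (hκ : ∀ s ∈ Set.Ioo a b, HasDerivAt κ (κ' s) s)
    (hδ : ∀ s ∈ Set.Ioo a b, HasDerivAt δ (δ' s) s)
    (hδ0 : ∀ s ∈ Set.Ioo a b, δ s ≠ 0)
    (hTT : ∀ s ∈ Set.Ioo a b, ⟪T s, T s⟫ = 1)
    (hNN : ∀ s ∈ Set.Ioo a b, ⟪N s, N s⟫ = κ s ^ 2)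
    (hTN : ∀ s ∈ Set.Ioo a b, ⟪T s, N s⟫ = 0)
    (hNB : ∀ s ∈ Set.Ioo a b, ⟪N s, B s⟫ = 0)
    -- `ψ` is the Bertrand mate: `ψ = φ + δ N_φ` ...
    (hψ : ∀ s, ψ s = φ s + δ s • N s)
    -- ... and the principal normals of `φ` and `ψ` are parallel:
    (hpar : ∀ s ∈ Set.Ioo a b, ε s ≠ 0 ∧ nψ s = ε s • ((κ s)⁻¹ • N s))
    (hperp : ∀ s ∈ Set.Ioo a b, ⟪deriv ψ s, nψ s⟫ = 0) :
    ∃ c : ℝ, c ≠ 0 ∧ (∀ s ∈ Set.Ioo a b, δ s = c / κ s) ∧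
      ∀ s ∈ Set.Ioo a b, ‖ψ s - φ s‖ = |c| := by
  -- Key: the derivative of δ·κ vanishes on the interval.
  have key : ∀ s ∈ Set.Ioo a b, δ' s * κ s + δ s * κ' s = 0 := by
    intro s hs
    have hψfun : ψ = fun t => φ t + δ t • N t := funext hψ
    have hψ' : HasDerivAt ψ
        (T s + (δ s • (-(κ s ^ 2) • T s + (κ' s / κ s) • N s + τ s • B s) + δ' s • N s)) s := by
      rw [hψfun]
      exact (hφ s hs).add ((hδ s hs).smul (hN s hs))
    have hderiv := hψ'.deriv
    have hε := hpar s hs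
    have h0 := hperp s hs
    rw [hderiv, hε.2] at h0
    have hNT : ⟪N s, T s⟫ = 0 := by rw [real_inner_comm]; exact hTN s hs
    have hBN : ⟪B s, N s⟫ = 0 := by rw [real_inner_comm]; exact hNB s hs
    simp only [inner_add_left, inner_smul_left, inner_smul_right, inner_add_right,
      inner_neg_left, RCLike.conj_to_real, map_neg] at h0
    rw [hBN, hTN s hs, hNN s hs] at h0
    have hκne : κ s ≠ 0 := (hκpos s hs).ne'
    have hεne := hε.1
    have hdiv : κ' s / κ s * κ s ^ 2 = κ' s * κ s := by field_simp
    have h1 : ε s * ((κ s)⁻¹ * (δ' s * κ s ^ 2 + δ s * (κ' s * κ s))) = 0 := by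
      rw [← hdiv]; linear_combination h0
    have h2 : δ' s * κ s ^ 2 + δ s * (κ' s * κ s) = 0 := by
      rcases mul_eq_zero.1 h1 with h | h
      · exact absurd h hεne
      · rcases mul_eq_zero.1 h with h | h
        · exact absurd h (inv_ne_zero hκne)
        · exact h
    have h4 : κ s * (δ' s * κ s + δ s * κ' s) = 0 := by ring_nf; ring_nf at h2; linarith
    exact (mul_eq_zero.1 h4).resolve_left hκne
  -- δ·κ is constant on the open interval.
  set s₀ := (a + b) / 2 with hs₀def
  have hs₀ : s₀ ∈ Set.Ioo a b := ⟨by simp only [hs₀def]; linarith, by simp only [hs₀def]; linarith⟩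
  set c := δ s₀ * κ s₀ with hc
  have hconst : ∀ s ∈ Set.Ioo a b, δ s * κ s = c := by
    intro s hs
    have hd : ∀ x ∈ Set.Ioo a b, HasDerivWithinAt (fun t => δ t * κ t) ((fun _ => (0:ℝ)) x)
        (Set.Ioo a b) x := by
      intro x hx
      have h1 := ((hδ x hx).mul (hκ x hx)).hasDerivWithinAt (s := Set.Ioo a b)
      have h0 : δ' x * κ x + δ x * κ' x = 0 := key x hx
      exact h0 ▸ h1
    have := (convex_Ioo a b).norm_image_sub_le_of_norm_hasDerivWithin_le (C := 0) hd
      (fun x _ => by simp) hs₀ hs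
    simp only [zero_mul, norm_le_zero_iff, sub_eq_zero] at this
    exact this
  have hcne : c ≠ 0 := mul_ne_zero (hδ0 s₀ hs₀) (hκpos s₀ hs₀).ne'
  refine ⟨c, hcne, ?_, ?_⟩
  · intro s hs
    rw [eq_div_iff (hκpos s hs).ne']
    exact hconst s hs
  · intro s hs
    have hNnorm : ‖N s‖ = κ s := by
      have h1 : ‖N s‖ ^ 2 = κ s ^ 2 := by
        rw [← real_inner_self_eq_norm_sq]; exact hNN s hs
      rw [← Real.sqrt_sq (norm_nonneg (N s)), h1, Real.sqrt_sq (hκpos s hs).le]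
    rw [hψ s, add_sub_cancel_left, norm_smul, Real.norm_eq_abs, hNnorm,
      ← hconst s hs, abs_mul, abs_of_pos (hκpos s hs)]
end

section
/- Let (φ, ψ) be a Bertrand pair with ψ arclength s* and φ arclength s, offset constant c and constant tangent angle θ. Then (ds*/ds)cos θ = 1 - cκ_φ and (ds*/ds)sin θ = cτ_φ. -/
open scoped RealInnerProductSpace

/-!
Differentiating `ψ = φ + (c/κ)N` with the modified Frenet equation for `N'` gives
`ψ' = (1 - cκ)T + (cτ/κ)B`, the two `N`-components `-(cκ'/κ²)N` and `(c/κ)(κ'/κ)N` cancelling.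
Comparing with `ψ' = σ(cos θ T + (sin θ/κ)B)` in the orthogonal pair `T, B` yields both relations.
-/

theorem linearIndependent_pair_of_inner_eq_zero {𝕜 E : Type*} [RCLike 𝕜] [NormedAddCommGroup E]
    [InnerProductSpace 𝕜 E] {x y : E} (hx : x ≠ 0) (hy : y ≠ 0) (hxy : inner 𝕜 x y = 0) :
    LinearIndependent 𝕜 ![x, y] := by
  refine linearIndependent_of_ne_zero_of_inner_eq_zero (by simp [Fin.forall_fin_two, hx, hy]) ?_
  intro i j hij
  fin_cases i <;> fin_cases j <;> simp_all [inner_eq_zero_symm]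

theorem hasDerivAt_bertrand_offset {E : Type*} [NormedAddCommGroup E] [NormedSpace ℝ E]
    {φ N : ℝ → E} {κ : ℝ → ℝ} {t b : E} {κ' τ c s : ℝ}
    (hφ : HasDerivAt φ t s) (hκ : HasDerivAt κ κ' s) (hκs : κ s ≠ 0)
    (hN : HasDerivAt N (-(κ s ^ 2) • t + (κ' / κ s) • N s + τ • b) s) :
    HasDerivAt (fun u => φ u + (c / κ u) • N u) ((1 - c * κ s) • t + (c * τ / κ s) • b) s := by
  refine (hφ.add (((hasDerivAt_const s c).fun_div hκ hκs).fun_smul hN)).congr_deriv ?_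
  match_scalars <;> field_simp <;> ring

theorem bertrand_pair_speed_relations_general
    (I : Set ℝ)
    (φ ψ T N B : ℝ → EuclideanSpace ℝ (Fin 3)) (κ κ' τ σ : ℝ → ℝ) (c θ : ℝ)
    (hκpos : ∀ s ∈ I, 0 < κ s)
    (hφ : ∀ s ∈ I, HasDerivAt φ (T s) s)
    (hN : ∀ s ∈ I, HasDerivAt N (-(κ s ^ 2) • T s + (κ' s / κ s) • N s + τ s • B s) s)
    (hκ : ∀ s ∈ I, HasDerivAt κ (κ' s) s)
    (hTT : ∀ s ∈ I, ⟪T s, T s⟫ = 1)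
    (hBB : ∀ s ∈ I, ⟪B s, B s⟫ = κ s ^ 2)
    (hTB : ∀ s ∈ I, ⟪T s, B s⟫ = 0)
    -- `ψ` is the Bertrand mate with offset `c`:
    (hψ : ∀ s, ψ s = φ s + (c / κ s) • N s)
    -- the unit tangent of `ψ` makes the constant angle `θ` with `T_φ` inside the `T,B`-plane:
    (hangle : ∀ s ∈ I, deriv ψ s = σ s • (Real.cos θ • T s + (Real.sin θ / κ s) • B s)) :
    ∀ s ∈ I, σ s * Real.cos θ = 1 - c * κ s ∧ σ s * Real.sin θ = c * τ s := by
  intro s hs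
  have hκs : κ s ≠ 0 := (hκpos s hs).ne'
  have hψ' : HasDerivAt ψ ((1 - c * κ s) • T s + (c * τ s / κ s) • B s) s := by
    rw [funext hψ]
    exact hasDerivAt_bertrand_offset (hφ s hs) (hκ s hs) hκs (hN s hs)
  have hT0 : T s ≠ 0 := fun h => by simpa [h] using hTT s hs
  have hB0 : B s ≠ 0 := fun h => pow_ne_zero 2 hκs (by simpa [h] using (hBB s hs).symm)
  have hcoeffs : (σ s * Real.cos θ) • T s + (σ s * (Real.sin θ / κ s)) • B s
      = (1 - c * κ s) • T s + (c * τ s / κ s) • B s := by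
    rw [mul_smul, mul_smul, ← smul_add, ← hangle s hs, hψ'.deriv]
  obtain ⟨hcos, hsin⟩ :=
    (linearIndependent_pair_of_inner_eq_zero hT0 hB0 (hTB s hs)).eq_of_pair hcoeffs
  refine ⟨hcos, ?_⟩
  rwa [← mul_div_assoc, div_left_inj' hκs] at hsin

/-- For a Bertrand pair `(φ, ψ)`, `ψ = φ + (c/κ_φ)N_φ`, with arclength `s*` of `ψ` and
constant tangent angle `θ`, one has `(ds*/ds)cos θ = 1 - cκ_φ` and `(ds*/ds)sin θ = cτ_φ`. -/
theorem bertrand_pair_speed_relations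
    (I : Set ℝ) (hI : IsOpen I)
    (φ ψ T N B : ℝ → EuclideanSpace ℝ (Fin 3)) (κ κ' τ σ : ℝ → ℝ) (c θ : ℝ)
    (hc : c ≠ 0)
    (hκpos : ∀ s ∈ I, 0 < κ s)
    (hφ : ∀ s ∈ I, HasDerivAt φ (T s) s)
    (hT : ∀ s ∈ I, HasDerivAt T (N s) s)
    (hN : ∀ s ∈ I, HasDerivAt N (-(κ s ^ 2) • T s + (κ' s / κ s) • N s + τ s • B s) s)
    (hκ : ∀ s ∈ I, HasDerivAt κ (κ' s) s)
    (hTT : ∀ s ∈ I, ⟪T s, T s⟫ = 1)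
    (hBB : ∀ s ∈ I, ⟪B s, B s⟫ = κ s ^ 2)
    (hTB : ∀ s ∈ I, ⟪T s, B s⟫ = 0)
    (hTN : ∀ s ∈ I, ⟪T s, N s⟫ = 0)
    (hNB : ∀ s ∈ I, ⟪N s, B s⟫ = 0)
    -- `ψ` is the Bertrand mate with offset `c`:
    (hψ : ∀ s, ψ s = φ s + (c / κ s) • N s)
    -- `σ = ds*/ds` is the speed of `ψ`:
    (hσ : ∀ s ∈ I, σ s = ‖deriv ψ s‖)
    -- the unit tangent of `ψ` makes the constant angle `θ` with `T_φ` inside the `T,B`-plane: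
    (hangle : ∀ s ∈ I, deriv ψ s = σ s • (Real.cos θ • T s + (Real.sin θ / κ s) • B s)) :
    ∀ s ∈ I, σ s * Real.cos θ = 1 - c * κ s ∧ σ s * Real.sin θ = c * τ s :=
  bertrand_pair_speed_relations_general I φ ψ T N B κ κ' τ σ c θ hκpos hφ hN hκ hTT hBB hTB hψ
    hangle
end

section
/- If a unit-speed curve ψ in ℝ³ satisfies cκ + acτ = 1 for constants c ≠ 0 and a, and τ ≠ 0 everywhere, then the curve φ(s) = ψ(s) + (c/κ(s))N(s) (with N = κn) has, at corresponding points, unit tangent T_φ = ±(aT + B/κ)/√(a²+1) and its principal normal is parallel to that of ψ; hence (ψ, φ) is a Bertrand pair. -/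
/-!
Along `ψ`, `φ' = T + (c/κ)' N + (c/κ) N' = (1 - cκ) T + (cτ/κ) B`, which the linear relation
turns into `cτ (aT + B/κ)`. Since `τ ≠ 0`, the unit tangent of `φ` is `±V` with
`V = (aT + B/κ)/√(a²+1)`. The frame equations give `(aT + B/κ)' = (a - τ/κ) N`, and where the
unit tangent of `φ` is continuous its sign against `V` is locally constant, so its derivative is
a multiple of `N`.
-/

open scoped RealInnerProductSpace
open Filter Topology

section

variable {E : Type*} [NormedAddCommGroup E] [NormedSpace ℝ E]
  {ψ T N B : ℝ → E} {κ : ℝ → ℝ} {κ' τ s : ℝ}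

theorem hasDerivAt_add_div_smul_of_linear_relation {c a : ℝ}
    (hψ : HasDerivAt ψ (T s) s)
    (hN : HasDerivAt N (-(κ s ^ 2) • T s + (κ' / κ s) • N s + τ • B s) s)
    (hκ : HasDerivAt κ κ' s) (hκ0 : κ s ≠ 0) (hlin : c * κ s + a * c * τ = 1) :
    HasDerivAt (fun u => ψ u + (c / κ u) • N u) ((c * τ) • (a • T s + (κ s)⁻¹ • B s)) s := by
  refine (hψ.add ((hasDerivAt_const s c).div hκ hκ0 |>.smul hN)).congr_deriv ?_
  simp only [Pi.div_apply]
  match_scalars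
  · field_simp
    linear_combination -hlin
  · field_simp
    ring
  · field_simp

theorem hasDerivAt_smul_add_inv_smul
    (hT : HasDerivAt T (N s) s) (hB : HasDerivAt B (-τ • N s + (κ' / κ s) • B s) s)
    (hκ : HasDerivAt κ κ' s) (hκ0 : κ s ≠ 0) (a : ℝ) :
    HasDerivAt (fun u => a • T u + (κ u)⁻¹ • B u) ((a - τ / κ s) • N s) s := by
  refine ((hT.const_smul a).add ((hκ.inv hκ0).smul hB)).congr_deriv ?_
  simp only [Pi.inv_apply]
  match_scalars <;> field_simp <;> ring

noncomputable def unitTangent (γ : ℝ → E) (s : ℝ) : E :=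
  ‖deriv γ s‖⁻¹ • deriv γ s

theorem unitTangent_eq_or_eq_neg_of_hasDerivAt {γ : ℝ → E} {k : ℝ} {w : E}
    (h : HasDerivAt γ (k • w) s) (hk : k ≠ 0) :
    unitTangent γ s = ‖w‖⁻¹ • w ∨ unitTangent γ s = -(‖w‖⁻¹ • w) := by
  rw [unitTangent, h.deriv, norm_smul, Real.norm_eq_abs, smul_smul, mul_inv, mul_right_comm,
    ← smul_smul]
  rcases hk.lt_or_gt with hneg | hpos
  · right
    rw [abs_of_neg hneg, inv_neg, neg_mul, inv_mul_cancel₀ hk, neg_one_smul]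
  · left
    rw [abs_of_pos hpos, inv_mul_cancel₀ hk, one_smul]

theorem eventuallyEq_or_eventuallyEq_neg {X : Type*} [TopologicalSpace X] {f g : X → E} {x : X}
    (hf : ContinuousAt f x) (hg : ContinuousAt g x) (hg0 : g x ≠ 0)
    (h : ∀ᶠ y in 𝓝 x, f y = g y ∨ f y = -g y) : f =ᶠ[𝓝 x] g ∨ f =ᶠ[𝓝 x] -g := by
  have hgg : g x + g x ≠ 0 := by rw [← two_smul ℝ]; exact smul_ne_zero two_ne_zero hg0
  rcases h.self_of_nhds with hx | hx
  · left
    have hne : f x + g x ≠ 0 := by rwa [hx]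
    filter_upwards [h, (hf.add hg).eventually_ne hne] with y hy hne
    exact hy.resolve_right fun h' => hne (show f y + g y = 0 by rw [h', neg_add_cancel])
  · right
    have hne : f x - g x ≠ 0 := by rwa [hx, sub_eq_add_neg, ← neg_add, neg_ne_zero]
    filter_upwards [h, (hf.sub hg).eventually_ne hne] with y hy hne
    exact hy.resolve_left fun h' => hne (show f y - g y = 0 by rw [h', sub_self])

end

theorem norm_smul_add_inv_smul {E : Type*} [NormedAddCommGroup E] [InnerProductSpace ℝ E]
    {T B : E} {k : ℝ} (hk : k ≠ 0) (hTT : ⟪T, T⟫ = 1) (hTB : ⟪T, B⟫ = 0) (hBB : ⟪B, B⟫ = k ^ 2)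
    (a : ℝ) : ‖a • T + k⁻¹ • B‖ = √(a ^ 2 + 1) := by
  rw [← Real.sqrt_sq (norm_nonneg _), ← real_inner_self_eq_norm_sq]
  congr 1
  simp only [inner_add_left, inner_add_right, real_inner_smul_left, real_inner_smul_right,
    real_inner_comm T B, hTT, hTB, hBB]
  field_simp
  ring

theorem linear_relation_gives_bertrand_mate_general
    (I : Set ℝ) (hI : IsOpen I)
    (ψ T N B : ℝ → EuclideanSpace ℝ (Fin 3)) (κ κ' τ : ℝ → ℝ) (c a : ℝ)
    (hc : c ≠ 0)
    (hκpos : ∀ s ∈ I, 0 < κ s)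
    (hτ0 : ∀ s ∈ I, τ s ≠ 0)
    (hψ : ∀ s ∈ I, HasDerivAt ψ (T s) s)
    (hT : ∀ s ∈ I, HasDerivAt T (N s) s)
    (hN : ∀ s ∈ I, HasDerivAt N (-(κ s ^ 2) • T s + (κ' s / κ s) • N s + τ s • B s) s)
    (hB : ∀ s ∈ I, HasDerivAt B (-τ s • N s + (κ' s / κ s) • B s) s)
    (hκ : ∀ s ∈ I, HasDerivAt κ (κ' s) s)
    (hTT : ∀ s ∈ I, ⟪T s, T s⟫ = 1)
    (hBB : ∀ s ∈ I, ⟪B s, B s⟫ = κ s ^ 2)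
    (hTB : ∀ s ∈ I, ⟪T s, B s⟫ = 0)
    -- the linear relation `cκ + acτ = 1`
    (hlin : ∀ s ∈ I, c * κ s + a * c * τ s = 1) :
    (∀ s ∈ I,
      ‖deriv (fun u => ψ u + (c / κ u) • N u) s‖⁻¹ •
          deriv (fun u => ψ u + (c / κ u) • N u) s =
        (Real.sqrt (a ^ 2 + 1))⁻¹ • (a • T s + (κ s)⁻¹ • B s) ∨
      ‖deriv (fun u => ψ u + (c / κ u) • N u) s‖⁻¹ •
          deriv (fun u => ψ u + (c / κ u) • N u) s =
        -((Real.sqrt (a ^ 2 + 1))⁻¹ • (a • T s + (κ s)⁻¹ • B s))) ∧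
    -- the principal normal direction of `φ` is parallel to `N`
    (∀ s ∈ I, ∃ r : ℝ,
      deriv (fun u => ‖deriv (fun v => ψ v + (c / κ v) • N v) u‖⁻¹ •
        deriv (fun v => ψ v + (c / κ v) • N v) u) s = r • N s) := by
  set φ := fun u => ψ u + (c / κ u) • N u
  set W := fun u => a • T u + (κ u)⁻¹ • B u
  have hW : ∀ s ∈ I, ‖W s‖ = √(a ^ 2 + 1) := fun s hs =>
    norm_smul_add_inv_smul (hκpos s hs).ne' (hTT s hs) (hTB s hs) (hBB s hs) a
  have hunit : ∀ s ∈ I, unitTangent φ s = (√(a ^ 2 + 1))⁻¹ • W s ∨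
      unitTangent φ s = -((√(a ^ 2 + 1))⁻¹ • W s) := fun s hs => by
    rw [← hW s hs]
    exact unitTangent_eq_or_eq_neg_of_hasDerivAt (hasDerivAt_add_div_smul_of_linear_relation
      (hψ s hs) (hN s hs) (hκ s hs) (hκpos s hs).ne' (hlin s hs)) (mul_ne_zero hc (hτ0 s hs))
  refine ⟨hunit, fun s hs => show ∃ r : ℝ, deriv (unitTangent φ) s = r • N s from ?_⟩
  by_cases hdiff : DifferentiableAt ℝ (unitTangent φ) s
  · have hV := (hasDerivAt_smul_add_inv_smul (hT s hs) (hB s hs) (hκ s hs) (hκpos s hs).ne'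
      a).const_smul (√(a ^ 2 + 1))⁻¹
    have hV0 : (√(a ^ 2 + 1))⁻¹ • W s ≠ 0 := by
      rw [← norm_ne_zero_iff, norm_smul, hW s hs, norm_inv, Real.norm_of_nonneg (by positivity),
        inv_mul_cancel₀ (by positivity)]
      exact one_ne_zero
    rcases eventuallyEq_or_eventuallyEq_neg hdiff.continuousAt hV.continuousAt hV0
      (eventually_of_mem (hI.mem_nhds hs) hunit) with h | h
    · exact ⟨_, h.deriv_eq.trans (hV.deriv.trans (smul_smul _ _ _))⟩
    · exact ⟨_, h.deriv_eq.trans (hV.neg.deriv.trans (by rw [smul_smul, ← neg_smul]))⟩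
  -- junk value: here `deriv` is `0 = 0 • N s`
  · exact ⟨0, by rw [deriv_zero_of_not_differentiableAt hdiff, zero_smul]⟩

/-- If a unit speed curve `ψ` satisfies `cκ + acτ = 1` with `c ≠ 0` and `τ ≠ 0`, then the
curve `φ = ψ + (c/κ)N` has unit tangent `±(aT + B/κ)/√(a²+1)` and its principal normal is
parallel to that of `ψ`; hence `(ψ, φ)` is a Bertrand pair. -/
theorem linear_relation_gives_bertrand_mate
    (I : Set ℝ) (hI : IsOpen I)
    (ψ T N B : ℝ → EuclideanSpace ℝ (Fin 3)) (κ κ' τ : ℝ → ℝ) (c a : ℝ)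
    (hc : c ≠ 0)
    (hκpos : ∀ s ∈ I, 0 < κ s)
    (hτ0 : ∀ s ∈ I, τ s ≠ 0)
    (hψ : ∀ s ∈ I, HasDerivAt ψ (T s) s)
    (hT : ∀ s ∈ I, HasDerivAt T (N s) s)
    (hN : ∀ s ∈ I, HasDerivAt N (-(κ s ^ 2) • T s + (κ' s / κ s) • N s + τ s • B s) s)
    (hB : ∀ s ∈ I, HasDerivAt B (-τ s • N s + (κ' s / κ s) • B s) s)
    (hκ : ∀ s ∈ I, HasDerivAt κ (κ' s) s)
    (hTT : ∀ s ∈ I, ⟪T s, T s⟫ = 1)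
    (hNN : ∀ s ∈ I, ⟪N s, N s⟫ = κ s ^ 2)
    (hBB : ∀ s ∈ I, ⟪B s, B s⟫ = κ s ^ 2)
    (hTN : ∀ s ∈ I, ⟪T s, N s⟫ = 0)
    (hTB : ∀ s ∈ I, ⟪T s, B s⟫ = 0)
    (hNB : ∀ s ∈ I, ⟪N s, B s⟫ = 0)
    -- the linear relation `cκ + acτ = 1`
    (hlin : ∀ s ∈ I, c * κ s + a * c * τ s = 1) :
    (∀ s ∈ I,
      ‖deriv (fun u => ψ u + (c / κ u) • N u) s‖⁻¹ •
          deriv (fun u => ψ u + (c / κ u) • N u) s =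
        (Real.sqrt (a ^ 2 + 1))⁻¹ • (a • T s + (κ s)⁻¹ • B s) ∨
      ‖deriv (fun u => ψ u + (c / κ u) • N u) s‖⁻¹ •
          deriv (fun u => ψ u + (c / κ u) • N u) s =
        -((Real.sqrt (a ^ 2 + 1))⁻¹ • (a • T s + (κ s)⁻¹ • B s))) ∧
    -- the principal normal direction of `φ` is parallel to `N`
    (∀ s ∈ I, ∃ r : ℝ,
      deriv (fun u => ‖deriv (fun v => ψ v + (c / κ v) • N v) u‖⁻¹ •
        deriv (fun v => ψ v + (c / κ v) • N v) u) s = r • N s) :=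
  linear_relation_gives_bertrand_mate_general I hI ψ T N B κ κ' τ c a hc hκpos hτ0 hψ hT hN hB hκ
    hTT hBB hTB hlin
end
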